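/- arXiv:2212.08867 — 2 statements merged into one kernel-verified Lean document; each statement's English description precedes it below -/
import Mathlib

section
/- For γ > 0, ν > −1, and z ∈ ℝ, ∫₀^∞ t^ν cos(t z) e^{−γ t²} dt = (1/(2γ^{(ν+1)/2})) Γ((ν+1)/2) e^{−z²/(4γ)} · ₁F₁(−ν/2; 1/2; z²/(4γ)), where ₁F₁ is the Kummer confluent hypergeometric function. -/
open MeasureTheory Real Set

/-- The Kummer confluent hypergeometric function
`₁F₁(a; b; x) = Σ_{k≥0} (a)_k x^k / ((b)_k k!)`. -/
noncomputable def kummer (a b x : ℝ) : ℝ :=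
  ∑' k : ℕ, ((ascPochhammer ℝ k).eval a * x ^ k) / ((ascPochhammer ℝ k).eval b * (k.factorial))

namespace KummerAux

noncomputable def P (k : ℕ) (a : ℝ) : ℝ := (ascPochhammer ℝ k).eval a

lemma P_zero (a : ℝ) : P 0 a = 1 := by simp [P]

lemma P_succ (k : ℕ) (a : ℝ) : P (k+1) a = P k a * (a + k) :=
  ascPochhammer_succ_eval k a

lemma P_succ_left (k : ℕ) (a : ℝ) : P (k+1) a = a * P k (a+1) := by
  simp only [P, ascPochhammer_succ_left, Polynomial.eval_mul, Polynomial.eval_X,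
    Polynomial.eval_comp, Polynomial.eval_add, Polynomial.eval_one]

lemma P_pos {a : ℝ} (ha : 0 < a) (k : ℕ) : 0 < P k a := ascPochhammer_pos k a ha

lemma P_ne_zero {b : ℝ} (hb : ∀ j : ℕ, b + j ≠ 0) (k : ℕ) : P k b ≠ 0 := by
  induction k with
  | zero => simp [P_zero]
  | succ k ih => rw [P_succ]; exact mul_ne_zero ih (hb k)

lemma abs_P_le (a : ℝ) (k : ℕ) : |P k a| ≤ P k (|a|+1) := by
  induction k with
  | zero => simp [P_zero]
  | succ k ih =>
    rw [P_succ, P_succ, abs_mul]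
    refine mul_le_mul ih ?_ (abs_nonneg _) (P_pos (by positivity) k).le
    calc |a + k| ≤ |a| + k := by simpa using abs_add_le a k
    _ ≤ |a| + 1 + k := by linarith

lemma vandermonde (c : ℝ) : ∀ n : ℕ, ∀ b : ℝ, (∀ j : ℕ, b + j ≠ 0) →
    ∑ j ∈ Finset.range (n+1), (-1:ℝ)^j * (n.choose j) * (P j c / P j b)
      = P n (b - c) / P n b := by
  intro n
  induction n with
  | zero => intro b hb; simp [P_zero]
  | succ n ih =>
    intro b hb
    have hb0 : b ≠ 0 := by simpa using hb 0
    have hb1 : ∀ j : ℕ, (b+1) + j ≠ 0 := by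
      intro j
      have := hb (j+1)
      push_cast at this ⊢
      intro h; exact this (by linarith)
    set f : ℕ → ℝ := fun j => P j c / P j b with hf
    -- Step 1: rewrite as difference sum
    have step1 : ∑ j ∈ Finset.range (n+2), (-1:ℝ)^j * ((n+1).choose j) * f j
        = ∑ j ∈ Finset.range (n+1), (-1:ℝ)^j * (n.choose j) * (f j - f (j+1)) := by
      have split : ∀ j : ℕ, (-1:ℝ)^(j+1) * (((n+1).choose (j+1) : ℕ) : ℝ) * f (j+1)
          = (-1)^(j+1) * (n.choose j) * f (j+1) + (-1)^(j+1) * (n.choose (j+1)) * f (j+1) := by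
        intro j
        rw [Nat.choose_succ_succ]
        push_cast
        ring
      rw [Finset.sum_range_succ' (fun j => (-1:ℝ)^j * ((n+1).choose j) * f j) (n+1)]
      simp only [split]
      rw [Finset.sum_add_distrib]
      have h2 : ∑ j ∈ Finset.range (n+1), (-1:ℝ)^(j+1) * (n.choose (j+1)) * f (j+1)
          = (∑ j ∈ Finset.range (n+2), (-1:ℝ)^j * (n.choose j) * f j) - 1 := by
        rw [Finset.sum_range_succ' (fun j => (-1:ℝ)^j * (n.choose j) * f j) (n+1)]
        simp [hf, P_zero]
      rw [h2, Finset.sum_range_succ (fun j => (-1:ℝ)^j * (n.choose j) * f j) (n+1)]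
      have hneg : ∑ x ∈ Finset.range (n+1), (-1:ℝ)^(x+1) * (n.choose x) * f (x+1)
          = - ∑ x ∈ Finset.range (n+1), (-1:ℝ)^x * (n.choose x) * f (x+1) := by
        rw [← Finset.sum_neg_distrib]
        exact Finset.sum_congr rfl fun x _ => by ring
      rw [hneg]
      simp only [mul_sub, Finset.sum_sub_distrib, Nat.choose_succ_self, Nat.cast_zero,
        Nat.choose_zero_right, Nat.cast_one, pow_zero]
      have hf0 : f 0 = 1 := by simp [hf, P_zero]
      rw [hf0]
      ring
    have step2 : ∀ j : ℕ, f j - f (j+1) = (b - c)/b * (P j c / P j (b+1)) := by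
      intro j
      have h2 : P j b ≠ 0 := P_ne_zero hb j
      have h3 : P j (b+1) ≠ 0 := P_ne_zero hb1 j
      have h5 : P (j+1) b ≠ 0 := P_ne_zero hb (j+1)
      have num : P j c * P (j+1) b - P j b * P (j+1) c = (b - c) * P j c * P j b := by
        rw [P_succ j c, P_succ j b]; ring
      rw [hf]
      simp only
      rw [div_sub_div _ _ h2 h5, num, P_succ_left j b]
      field_simp
    rw [step1]
    calc ∑ j ∈ Finset.range (n+1), (-1:ℝ)^j * (n.choose j) * (f j - f (j+1))
        = (b-c)/b * ∑ j ∈ Finset.range (n+1), (-1:ℝ)^j * (n.choose j) * (P j c / P j (b+1)) := by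
          rw [Finset.mul_sum]
          exact Finset.sum_congr rfl fun j _ => by rw [step2 j]; ring
      _ = (b-c)/b * (P n (b+1-c) / P n (b+1)) := by rw [ih (b+1) hb1]
      _ = P (n+1) (b-c) / P (n+1) b := by
          rw [P_succ_left n (b-c), P_succ_left n b]
          rw [div_mul_div_comm]
          ring_nf


lemma summable_norm_kummer (c b x : ℝ) (hb : 0 < b) :
    Summable (fun k : ℕ => ‖P k c * x ^ k / (P k b * k.factorial)‖) := by
  set M : ℕ → ℝ := fun k => P k (|c|+1) * |x| ^ k / (P k b * k.factorial) with hM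
  have hMpos : ∀ k, 0 ≤ M k := fun k => by
    have := P_pos (by positivity : (0:ℝ) < |c|+1) k
    have := P_pos hb k
    positivity
  have hMsum : Summable M := by
    apply summable_of_ratio_norm_eventually_le (r := 1/2) (by norm_num)
    rw [Filter.eventually_atTop]
    refine ⟨⌈|c|+1⌉₊ + ⌈4*|x|⌉₊ + 1, fun k hk => ?_⟩
    have hk1 : (1:ℝ) ≤ k := by
      have : 1 ≤ k := le_trans (by omega) hk
      exact_mod_cast this
    have hck : |c| + 1 ≤ (k:ℝ) := by
      calc |c| + 1 ≤ (⌈|c|+1⌉₊ : ℝ) := Nat.le_ceil _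
        _ ≤ (k:ℝ) := by exact_mod_cast le_trans (by omega) hk
    have hxk : 4 * |x| ≤ (k:ℝ) := by
      calc 4 * |x| ≤ (⌈4*|x|⌉₊ : ℝ) := Nat.le_ceil _
        _ ≤ (k:ℝ) := by exact_mod_cast le_trans (by omega) hk
    have hP1 : 0 < P k (|c|+1) := P_pos (by positivity) k
    have hPb : 0 < P k b := P_pos hb k
    have hfac : (0:ℝ) < k.factorial := by exact_mod_cast k.factorial_pos
    rw [Real.norm_of_nonneg (hMpos _), Real.norm_of_nonneg (hMpos _)]
    have hstep : M (k+1) = M k * ((|c| + 1 + k) * |x| / ((b + k) * (k+1))) := by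
      rw [hM]
      simp only [P_succ, pow_succ, Nat.factorial_succ]
      have hbk : (0:ℝ) < b + k := by positivity
      push_cast
      field_simp
    rw [hstep]
    have hratio : (|c| + 1 + k) * |x| / ((b + k) * (k+1)) ≤ 1/2 := by
      rw [div_le_iff₀ (by positivity)]
      have h1 : |c| + 1 + k ≤ 2 * k := by linarith
      have h2 : |x| ≤ k / 4 := by linarith
      nlinarith [abs_nonneg x, abs_nonneg c]
    calc M k * ((|c| + 1 + k) * |x| / ((b + k) * (k+1))) ≤ M k * (1/2) :=
          mul_le_mul_of_nonneg_left hratio (hMpos k)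
      _ = 1/2 * M k := by ring
  apply Summable.of_nonneg_of_le (fun k => norm_nonneg _) _ hMsum
  intro k
  have hPb : 0 < P k b := P_pos hb k
  have hfac : (0:ℝ) < k.factorial := by exact_mod_cast k.factorial_pos
  have heq : ‖P k c * x ^ k / (P k b * k.factorial)‖
      = |P k c| * |x| ^ k / (P k b * k.factorial) := by
    rw [Real.norm_eq_abs, abs_div, abs_mul, abs_mul, abs_pow,
      abs_of_pos hPb, abs_of_pos hfac]
  rw [heq, hM]
  simp only
  gcongr
  exact abs_P_le c k

lemma summable_kummer (c b x : ℝ) (hb : 0 < b) :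
    Summable (fun k : ℕ => P k c * x ^ k / (P k b * k.factorial)) :=
  (summable_norm_kummer c b x hb).of_norm


lemma exp_tsum (y : ℝ) : Real.exp y = ∑' n : ℕ, y ^ n / n.factorial := by
  rw [Real.exp_eq_exp_ℝ, NormedSpace.exp_eq_tsum_div]

lemma Gamma_add_nat {a : ℝ} (ha : 0 < a) (k : ℕ) :
    Real.Gamma (a + k) = Real.Gamma a * P k a := by
  induction k with
  | zero => simp [P_zero]
  | succ k ih =>
    have h : a + ((k+1 : ℕ) : ℝ) = (a + k) + 1 := by push_cast; ring
    rw [h, Real.Gamma_add_one (by positivity : (0:ℝ) < a + k).ne', ih, P_succ]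
    ring

lemma factorial_two_mul_real (k : ℕ) :
    ((2*k).factorial : ℝ) = 4 ^ k * k.factorial * P k (1/2) := by
  induction k with
  | zero => simp [P_zero]
  | succ k ih =>
    have h2 : ((2*(k+1)).factorial : ℝ) = (2*k+2) * (2*k+1) * (2*k).factorial := by
      have h : 2*(k+1) = (2*k+1)+1 := by ring
      rw [h, Nat.factorial_succ, Nat.factorial_succ]
      push_cast; ring
    rw [h2, ih, P_succ, Nat.factorial_succ]
    push_cast; ring

lemma kummer_transform (a b x : ℝ) (hb : 0 < b) :
    (∑' k : ℕ, (-x) ^ k / k.factorial)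
      * (∑' k : ℕ, P k (b - a) * x ^ k / (P k b * k.factorial))
    = ∑' k : ℕ, P k a * (-x) ^ k / (P k b * k.factorial) := by
  have hb' : ∀ j : ℕ, b + (j:ℝ) ≠ 0 := fun j => by positivity
  have hf : Summable (fun k : ℕ => ‖(-x) ^ k / (k.factorial : ℝ)‖) := by
    apply (Real.summable_pow_div_factorial |x|).congr
    intro n
    rw [Real.norm_eq_abs, abs_div, abs_pow, abs_neg, abs_of_pos
      (by exact_mod_cast n.factorial_pos : (0:ℝ) < n.factorial)]
  have hg := summable_norm_kummer (b - a) b x hb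
  rw [tsum_mul_tsum_eq_tsum_sum_range_of_summable_norm hf hg]
  apply tsum_congr
  intro n
  have hnfac : ((n.factorial : ℝ)) ≠ 0 := by exact_mod_cast n.factorial_ne_zero
  have hterm : ∀ j ∈ Finset.range (n+1),
      (-x) ^ j / (j.factorial : ℝ) * (P (n-j) (b-a) * x ^ (n-j) / (P (n-j) b * (n-j).factorial))
      = (fun i => (-x) ^ n / n.factorial
          * ((-1:ℝ) ^ i * (n.choose i) * (P i (b-a) / P i b))) (n - j) := by
    intro j hj
    have hjn : j ≤ n := Finset.mem_range_succ_iff.mp hj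
    simp only
    have hpow : (-x) ^ n * (-1:ℝ) ^ (n-j) = (-x) ^ j * x ^ (n-j) := by
      have h1 : (-x) ^ n = (-x) ^ j * (-x) ^ (n-j) := by
        rw [← pow_add, Nat.add_sub_cancel' hjn]
      rw [h1, mul_assoc, ← mul_pow]
      norm_num
    have hchoose : ((n.choose (n-j) : ℕ) : ℝ) * j.factorial * (n-j).factorial
        = n.factorial := by
      rw [Nat.choose_symm hjn]
      exact_mod_cast congrArg (fun m : ℕ => (m : ℝ))
        (Nat.choose_mul_factorial_mul_factorial hjn)
    have h2 : ((j.factorial : ℕ) : ℝ) ≠ 0 := by exact_mod_cast j.factorial_ne_zero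
    have h3 : (((n-j).factorial : ℕ) : ℝ) ≠ 0 := by exact_mod_cast (n-j).factorial_ne_zero
    have h4 : P (n-j) b ≠ 0 := (P_pos hb _).ne'
    have hC0 : ((n.choose (n-j) : ℕ) : ℝ) ≠ 0 := by
      exact_mod_cast (Nat.choose_pos (Nat.sub_le n j)).ne'
    generalize hC : ((n.choose (n-j) : ℕ) : ℝ) = C at hC0 hchoose ⊢
    generalize ((j.factorial : ℕ) : ℝ) = Fj at h2 hchoose ⊢
    generalize (((n-j).factorial : ℕ) : ℝ) = Fnj at h3 hchoose ⊢
    generalize P (n-j) (b-a) = p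
    generalize hq : P (n-j) b = q at h4 ⊢
    generalize hu : (-x) ^ j = u at hpow ⊢
    generalize hv : (-x) ^ n = v at hpow ⊢
    generalize hs : (-1:ℝ) ^ (n-j) = s at hpow ⊢
    generalize hw : x ^ (n-j) = w at hpow ⊢
    rw [← hchoose]
    field_simp
    linear_combination (-p) * hpow
  rw [Finset.sum_congr rfl hterm]
  have hrefl := Finset.sum_range_reflect
    (fun i => (-x) ^ n / n.factorial * ((-1:ℝ) ^ i * (n.choose i) * (P i (b-a) / P i b))) (n+1)
  simp only [Nat.add_sub_cancel] at hrefl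
  rw [hrefl, ← Finset.mul_sum]
  have hv := vandermonde (b - a) n b hb'
  have hsum : ∑ i ∈ Finset.range (n+1),
      (-1:ℝ) ^ i * (n.choose i) * (P i (b-a) / P i b) = P n a / P n b := by
    rw [hv, show b - (b-a) = a by ring]
  rw [hsum]
  field_simp
end KummerAux

open KummerAux in
theorem integral_rpow_cos_exp_neg_sq' (γ ν z : ℝ) (hγ : 0 < γ) (hν : -1 < ν) :
    (∫ t in Ioi (0 : ℝ), t ^ ν * Real.cos (t * z) * Real.exp (-γ * t ^ 2))
      = 1 / (2 * γ ^ ((ν + 1) / 2)) * Real.Gamma ((ν + 1) / 2)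
        * Real.exp (-z ^ 2 / (4 * γ)) *
          (∑' k : ℕ, P k (-ν / 2) * (z ^ 2 / (4 * γ)) ^ k / (P k (1/2) * k.factorial)) := by
  set a : ℝ := (ν + 1) / 2 with hadef
  have ha : 0 < a := by rw [hadef]; linarith
  set x : ℝ := z ^ 2 / (4 * γ) with hxdef
  have hx : 0 ≤ x := by positivity
  set c : ℕ → ℝ := fun k => (-1) ^ k * z ^ (2*k) / (2*k).factorial with hcdef
  set F : ℕ → ℝ → ℝ := fun k t => c k * (t ^ (ν + 2*(k:ℝ)) * Real.exp (-γ * t ^ 2))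
    with hFdef
  set K : ℝ := Real.Gamma a * γ ^ (-a) / 2 with hKdef
  -- pointwise series expansion
  have stepA : ∀ t ∈ Ioi (0:ℝ),
      t ^ ν * Real.cos (t * z) * Real.exp (-γ * t ^ 2) = ∑' k, F k t := by
    intro t ht
    rw [mem_Ioi] at ht
    rw [Real.cos_eq_tsum (t * z)]
    have h1 : t ^ ν * (∑' n : ℕ, (-1:ℝ) ^ n * (t*z) ^ (2*n) / (2*n).factorial)
          * Real.exp (-γ * t ^ 2)
        = ∑' n : ℕ, ((-1:ℝ) ^ n * (t*z) ^ (2*n) / (2*n).factorial)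
            * (t ^ ν * Real.exp (-γ * t ^ 2)) := by
      rw [tsum_mul_right]; ring
    rw [h1]
    apply tsum_congr
    intro n
    have hrpow : t ^ (ν + 2*(n:ℝ)) = t ^ ν * t ^ (2*n : ℕ) := by
      rw [Real.rpow_add ht, show (2*(n:ℝ)) = ((2*n : ℕ):ℝ) by push_cast; ring,
        Real.rpow_natCast]
    rw [hFdef, hcdef]
    simp only
    rw [hrpow, mul_pow]
    ring
  rw [setIntegral_congr_fun measurableSet_Ioi stepA]
  -- integrability of each term
  have hInt : ∀ k : ℕ, IntegrableOn (F k) (Ioi 0) := by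
    intro k
    have hk0 : (0:ℝ) ≤ (k:ℝ) := Nat.cast_nonneg k
    have hq : (-1:ℝ) < ν + 2*(k:ℝ) := by linarith
    exact (integrableOn_rpow_mul_exp_neg_mul_sq hγ hq).const_mul (c k)
  -- value of the base integral
  have hJ : ∀ k : ℕ, (∫ t in Ioi (0:ℝ), t ^ (ν + 2*(k:ℝ)) * Real.exp (-γ * t ^ 2))
      = γ ^ (-(a + k)) * (1/2) * Real.Gamma (a + k) := by
    intro k
    have hk0 : (0:ℝ) ≤ (k:ℝ) := Nat.cast_nonneg k
    have hq : (-1:ℝ) < ν + 2*(k:ℝ) := by linarith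
    have h := integral_rpow_mul_exp_neg_mul_rpow (p := 2) (q := ν + 2*(k:ℝ)) (b := γ)
      two_pos hq hγ
    have h2 : ∀ t ∈ Ioi (0:ℝ), t ^ (ν + 2*(k:ℝ)) * Real.exp (-γ * t ^ (2:ℝ))
        = t ^ (ν + 2*(k:ℝ)) * Real.exp (-γ * t ^ 2) := by
      intro t _; rw [Real.rpow_two]
    rw [setIntegral_congr_fun measurableSet_Ioi h2] at h
    rw [h, show -(ν + 2*(k:ℝ) + 1)/2 = -(a + k) by rw [hadef]; ring,
      show (ν + 2*(k:ℝ) + 1)/2 = a + k by rw [hadef]; ring]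
  -- the common algebraic identity
  have key : ∀ (k : ℕ) (u : ℝ),
      (u ^ k * z ^ (2*k) / (2*k).factorial) * (γ ^ (-(a + k)) * (1/2) * Real.Gamma (a + k))
      = K * (P k a * (u * x) ^ k / (P k (1/2) * k.factorial)) := by
    intro k u
    have hgk : γ ^ (-((k:ℕ):ℝ)) = (γ ^ (k:ℕ))⁻¹ := by
      rw [Real.rpow_neg hγ.le, Real.rpow_natCast]
    have hg1 : γ ^ (-(a + (k:ℝ))) = γ ^ (-a) * (γ ^ (k:ℕ))⁻¹ := by
      rw [show -(a + (k:ℝ)) = -a + (-((k:ℕ):ℝ)) by ring, Real.rpow_add hγ, hgk]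
    have hP : P k (1/2) ≠ 0 := (P_pos one_half_pos k).ne'
    have hkf : ((k.factorial : ℕ) : ℝ) ≠ 0 := by exact_mod_cast k.factorial_ne_zero
    have hgkne : (γ:ℝ) ^ (k:ℕ) ≠ 0 := pow_ne_zero k hγ.ne'
    have h4 : (4:ℝ) ^ k ≠ 0 := by positivity
    rw [hg1, Gamma_add_nat ha k, factorial_two_mul_real k, mul_pow u x k, hxdef,
      div_pow, mul_pow 4 γ k, pow_mul z 2 k, hKdef]
    field_simp
  -- interchange sum and integral
  have hnormval : ∀ k : ℕ, (∫ t in Ioi (0:ℝ), ‖F k t‖)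
      = K * (P k a * x ^ k / (P k (1/2) * k.factorial)) := by
    intro k
    have h2 : ∀ t ∈ Ioi (0:ℝ), ‖F k t‖
        = |c k| * (t ^ (ν + 2*(k:ℝ)) * Real.exp (-γ * t ^ 2)) := by
      intro t ht
      rw [mem_Ioi] at ht
      have hnn : (0:ℝ) ≤ t ^ (ν + 2*(k:ℝ)) * Real.exp (-γ * t ^ 2) := by positivity
      rw [hFdef]
      simp only
      rw [Real.norm_eq_abs, abs_mul, abs_of_nonneg hnn]
    rw [setIntegral_congr_fun measurableSet_Ioi h2, integral_const_mul, hJ k]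
    have hcabs : |c k| = z ^ (2*k) / ((2*k).factorial : ℕ) := by
      rw [hcdef]
      simp only
      rw [abs_div, abs_mul, abs_pow, abs_neg, abs_one, one_pow, one_mul,
        abs_of_nonneg (by rw [pow_mul]; positivity : (0:ℝ) ≤ z ^ (2*k)),
        abs_of_nonneg (by exact_mod_cast ((2*k).factorial_pos).le : (0:ℝ) ≤ (((2*k).factorial : ℕ) : ℝ))]
    rw [hcabs, show z ^ (2*k) / (((2*k).factorial : ℕ) : ℝ)
        = (1:ℝ) ^ k * z ^ (2*k) / ((2*k).factorial : ℕ) by rw [one_pow, one_mul],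
      key k 1, one_mul]
  have hSum : Summable (fun k : ℕ => ∫ t in Ioi (0:ℝ), ‖F k t‖) := by
    apply Summable.congr ((summable_kummer a (1/2) x one_half_pos).mul_left K)
    intro k
    exact (hnormval k).symm
  rw [← integral_tsum_of_summable_integral_norm hInt hSum]
  -- evaluate each integral
  have hval : ∀ k : ℕ, (∫ t in Ioi (0:ℝ), F k t)
      = K * (P k a * (-x) ^ k / (P k (1/2) * k.factorial)) := by
    intro k
    rw [hFdef]
    simp only
    rw [integral_const_mul, hJ k]
    have hc : c k = (-1:ℝ) ^ k * z ^ (2*k) / (2*k).factorial := by rw [hcdef]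
    rw [hc, key k (-1), neg_one_mul]
  rw [tsum_congr hval, tsum_mul_left]
  -- apply the Kummer transformation
  have htrans := kummer_transform a (1/2) x one_half_pos
  rw [show (1:ℝ)/2 - a = -ν/2 by rw [hadef]; ring] at htrans
  rw [← htrans, ← exp_tsum (-x)]
  rw [show -z^2/(4*γ) = -x by rw [hxdef]; ring]
  rw [hKdef, Real.rpow_neg hγ.le, hadef]
  ring


/-- `∫₀^∞ t^ν cos(tz) e^{−γt²} dt
      = (1/(2γ^{(ν+1)/2})) Γ((ν+1)/2) e^{−z²/(4γ)} ₁F₁(−ν/2; 1/2; z²/(4γ))`. -/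
theorem integral_rpow_cos_exp_neg_sq (γ ν z : ℝ) (hγ : 0 < γ) (hν : -1 < ν) :
    (∫ t in Ioi (0 : ℝ), t ^ ν * Real.cos (t * z) * Real.exp (-γ * t ^ 2))
      = 1 / (2 * γ ^ ((ν + 1) / 2)) * Real.Gamma ((ν + 1) / 2)
        * Real.exp (-z ^ 2 / (4 * γ)) * kummer (-ν / 2) (1 / 2) (z ^ 2 / (4 * γ)) := by
  rw [kummer]
  exact integral_rpow_cos_exp_neg_sq' γ ν z hγ hν
end

section
/- For γ > 0, ν > −1, and z ∈ ℝ, ∫₀^∞ t^ν sin(t z) e^{−γ t²} dt = (z/(2γ^{1+ν/2})) Γ(1 + ν/2) e^{−z²/(4γ)} · ₁F₁((1−ν)/2; 3/2; z²/(4γ)). -/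
open MeasureTheory Real Set

lemma poch_succ_left_eval (a : ℝ) (k : ℕ) :
    (ascPochhammer ℝ (k+1)).eval a = a * (ascPochhammer ℝ k).eval (a+1) := by
  rw [ascPochhammer_succ_left, Polynomial.eval_mul, Polynomial.eval_X, Polynomial.eval_comp]
  simp

lemma abs_poch_le (a : ℝ) (k : ℕ) :
    |(ascPochhammer ℝ k).eval a| ≤ (ascPochhammer ℝ k).eval (|a| + 1) := by
  induction k with
  | zero => simp
  | succ k ih =>
    rw [ascPochhammer_succ_eval, ascPochhammer_succ_eval, abs_mul]
    have h1 : |a + (k:ℝ)| ≤ |a| + 1 + k := by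
      calc |a + (k:ℝ)| ≤ |a| + |(k:ℝ)| := abs_add_le _ _
        _ ≤ |a| + 1 + k := by rw [Nat.abs_cast]; linarith
    exact mul_le_mul ih h1 (abs_nonneg _)
      (le_of_lt (ascPochhammer_pos k _ (by positivity)))

lemma poch_three_half (k : ℕ) :
    (ascPochhammer ℝ k).eval (3/2 : ℝ) * (4 ^ k * (k.factorial : ℝ))
      = ((2*k+1).factorial : ℝ) := by
  induction k with
  | zero => simp
  | succ k ih =>
    rw [ascPochhammer_succ_eval]
    have h2 : (2*(k+1)+1) = (2*k+1) + 1 + 1 := by ring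
    rw [h2, Nat.factorial_succ, Nat.factorial_succ, Nat.factorial_succ]
    push_cast
    rw [← ih]
    ring

lemma gamma_add_nat (s : ℝ) (hs : 0 < s) (k : ℕ) :
    Real.Gamma (s + k) = Real.Gamma s * (ascPochhammer ℝ k).eval s := by
  induction k with
  | zero => simp
  | succ k ih =>
    have : s + ((k:ℕ)+1:ℕ) = (s + k) + 1 := by push_cast; ring
    rw [this, Real.Gamma_add_one (by positivity), ih, ascPochhammer_succ_eval]
    ring

lemma vandermonde_poch (k : ℕ) : ∀ a b : ℝ, 0 < b →
    ∑ j ∈ Finset.range (k+1), (-1:ℝ)^j * (k.choose j) *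
        (ascPochhammer ℝ j).eval a / (ascPochhammer ℝ j).eval b
      = (ascPochhammer ℝ k).eval (b - a) / (ascPochhammer ℝ k).eval b := by
  induction k with
  | zero => intro a b hb; simp
  | succ k ih =>
    intro a b hb
    have hbk : (0:ℝ) < (ascPochhammer ℝ k).eval b := ascPochhammer_pos k b hb
    have hbk1 : (0:ℝ) < (ascPochhammer ℝ k).eval (b+1) := ascPochhammer_pos k _ (by linarith)
    -- split the sum using Pascal
    have split : ∑ j ∈ Finset.range (k+2), (-1:ℝ)^j * ((k+1).choose j) *
          (ascPochhammer ℝ j).eval a / (ascPochhammer ℝ j).eval b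
        = (∑ j ∈ Finset.range (k+1), (-1:ℝ)^j * (k.choose j) *
            (ascPochhammer ℝ j).eval a / (ascPochhammer ℝ j).eval b)
          - (a/b) * ∑ j ∈ Finset.range (k+1), (-1:ℝ)^j * (k.choose j) *
            (ascPochhammer ℝ j).eval (a+1) / (ascPochhammer ℝ j).eval (b+1) := by
      rw [Finset.sum_range_succ' (fun j => (-1:ℝ)^j * ((k+1).choose j) *
            (ascPochhammer ℝ j).eval a / (ascPochhammer ℝ j).eval b) (k+1)]
      have e1 : ∀ j ∈ Finset.range (k+1),
          (-1:ℝ)^(j+1) * ((k+1).choose (j+1)) *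
            (ascPochhammer ℝ (j+1)).eval a / (ascPochhammer ℝ (j+1)).eval b
          = ((-1:ℝ)^(j+1) * (k.choose (j+1)) *
              (ascPochhammer ℝ (j+1)).eval a / (ascPochhammer ℝ (j+1)).eval b)
            + (-(a/b)) * ((-1:ℝ)^j * (k.choose j) *
              (ascPochhammer ℝ j).eval (a+1) / (ascPochhammer ℝ j).eval (b+1)) := by
        intro j hj
        have hbj : (0:ℝ) < (ascPochhammer ℝ j).eval b := ascPochhammer_pos j b hb
        have hbj1 : (0:ℝ) < (ascPochhammer ℝ j).eval (b+1) := ascPochhammer_pos j _ (by linarith)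
        rw [Nat.choose_succ_succ]
        rw [poch_succ_left_eval a j, poch_succ_left_eval b j]
        push_cast
        field_simp
        ring
      rw [Finset.sum_congr rfl e1, Finset.sum_add_distrib, ← Finset.mul_sum]
      -- now recombine the first pieces
      have e2 : ((-1:ℝ)^(0:ℕ) * ((k+1).choose 0) *
            (ascPochhammer ℝ 0).eval a / (ascPochhammer ℝ 0).eval b)
          + ∑ j ∈ Finset.range (k+1), (-1:ℝ)^(j+1) * (k.choose (j+1)) *
            (ascPochhammer ℝ (j+1)).eval a / (ascPochhammer ℝ (j+1)).eval b
          = ∑ j ∈ Finset.range (k+1), (-1:ℝ)^j * (k.choose j) *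
            (ascPochhammer ℝ j).eval a / (ascPochhammer ℝ j).eval b := by
        rw [Finset.sum_range_succ' (fun j => (-1:ℝ)^j * (k.choose j) *
              (ascPochhammer ℝ j).eval a / (ascPochhammer ℝ j).eval b) k]
        have : ∑ j ∈ Finset.range k, (-1:ℝ)^(j+1) * (k.choose (j+1)) *
              (ascPochhammer ℝ (j+1)).eval a / (ascPochhammer ℝ (j+1)).eval b
            = ∑ j ∈ Finset.range (k+1), (-1:ℝ)^(j+1) * (k.choose (j+1)) *
              (ascPochhammer ℝ (j+1)).eval a / (ascPochhammer ℝ (j+1)).eval b := by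
          rw [Finset.sum_range_succ]
          simp [Nat.choose_succ_self]
        rw [this]; simp; ring
      linarith [e2]
    rw [split, ih a b hb, ih (a+1) (b+1) (by linarith)]
    -- (b+1) - (a+1) = b - a
    have hba : (b+1) - (a+1) = b - a := by ring
    rw [hba]
    -- final algebra
    rw [ascPochhammer_succ_eval (k) (b-a), ascPochhammer_succ_eval k b]
    have key : b * (ascPochhammer ℝ k).eval (b+1) = (ascPochhammer ℝ k).eval b * (b + k) := by
      rw [← poch_succ_left_eval, ascPochhammer_succ_eval]
    have hbk' : (0:ℝ) < b + k := by positivity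
    field_simp
    linear_combination (Polynomial.eval (b - a) (ascPochhammer ℝ k) * a) * key


lemma summable_norm_kummer (a x : ℝ) :
    Summable (fun k : ℕ => ‖(ascPochhammer ℝ k).eval a * x ^ k /
      ((ascPochhammer ℝ k).eval (3/2 : ℝ) * (k.factorial : ℝ))‖) := by
  by_cases hx : x = 0
  · apply summable_of_ne_finset_zero (s := {0})
    intro k hk
    have hk' : k ≠ 0 := by simpa using hk
    simp [hx, zero_pow hk']
  · set c := |a| + 1 with hc
    have hc0 : (0:ℝ) < c := by positivity
    have hc1 : (1:ℝ) ≤ c := by rw [hc]; linarith [abs_nonneg a]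
    have hx0 : (0:ℝ) < |x| := abs_pos.mpr hx
    set g : ℕ → ℝ := fun k => (ascPochhammer ℝ k).eval c * |x| ^ k /
      ((ascPochhammer ℝ k).eval (3/2 : ℝ) * (k.factorial : ℝ)) with hg
    have hgpos : ∀ k, 0 < g k := fun k => by
      have h1 := ascPochhammer_pos k c hc0
      have h2 := ascPochhammer_pos k (3/2 : ℝ) (by norm_num)
      have h3 := Nat.cast_pos (α := ℝ) |>.mpr k.factorial_pos
      positivity
    have key : ∀ k : ℕ, g (k+1) = g k * (((c+k) * |x|) / (((3/2:ℝ)+k)*(k+1))) := by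
      intro k
      have h2 := ascPochhammer_pos k (3/2 : ℝ) (by norm_num)
      have h3 := Nat.cast_pos (α := ℝ) |>.mpr k.factorial_pos
      simp only [hg, ascPochhammer_succ_eval, pow_succ, Nat.factorial_succ]
      push_cast
      field_simp
    have hsum : Summable g := by
      apply summable_of_ratio_test_tendsto_lt_one (l := 0) zero_lt_one
        (Filter.Eventually.of_forall fun k => (hgpos k).ne')
      have hr : (fun k : ℕ => ‖g (k+1)‖ / ‖g k‖)
          = fun k : ℕ => ((c+k) * |x|) / (((3/2:ℝ)+k)*(k+1)) := by
        funext k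
        rw [Real.norm_eq_abs, Real.norm_eq_abs, abs_of_pos (hgpos _), abs_of_pos (hgpos _),
          key k, mul_comm, mul_div_assoc, div_self (hgpos k).ne', mul_one]
      rw [hr]
      have hle : ∀ k : ℕ, ((c+k) * |x|) / (((3/2:ℝ)+k)*(k+1)) ≤ (c * |x|) * (1/((k:ℝ)+1)) := by
        intro k
        rw [div_le_iff₀ (by positivity)]
        have hck : c + (k:ℝ) ≤ c * ((3/2:ℝ) + k) := by nlinarith [Nat.cast_nonneg (α := ℝ) k]
        calc (c+(k:ℝ)) * |x| ≤ (c * ((3/2:ℝ)+k)) * |x| := by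
              apply mul_le_mul_of_nonneg_right hck (abs_nonneg x)
          _ = c * |x| * (1/((k:ℝ)+1)) * (((3/2:ℝ)+k)*(k+1)) := by
              field_simp
      apply squeeze_zero (fun k => by positivity) hle
      simpa using (tendsto_one_div_add_atTop_nhds_zero_nat).const_mul (c * |x|)
    refine hsum.of_nonneg_of_le (fun k => norm_nonneg _) (fun k => ?_)
    have h2 := ascPochhammer_pos k (3/2 : ℝ) (by norm_num)
    have h3 := Nat.cast_pos (α := ℝ) |>.mpr k.factorial_pos
    rw [Real.norm_eq_abs, abs_div, abs_mul, abs_pow, abs_of_pos (by positivity :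
      (0:ℝ) < (ascPochhammer ℝ k).eval (3/2:ℝ) * (k.factorial : ℝ))]
    simp only [hg]
    gcongr
    exact abs_poch_le a k

lemma summable_kummer (a x : ℝ) :
    Summable (fun k : ℕ => (ascPochhammer ℝ k).eval a * x ^ k /
      ((ascPochhammer ℝ k).eval (3/2 : ℝ) * (k.factorial : ℝ))) :=
  (summable_norm_kummer a x).of_norm

lemma kummer_transform (a x : ℝ) :
    Real.exp (-x) * kummer a (3/2) x = kummer (3/2 - a) (3/2) (-x) := by
  have hexp : Real.exp (-x) = ∑' m : ℕ, (-x)^m / (m.factorial : ℝ) := by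
    rw [Real.exp_eq_exp_ℝ, NormedSpace.exp_eq_tsum_div]
  have hf : Summable (fun m : ℕ => ‖(-x)^m / (m.factorial : ℝ)‖) := by
    simpa [norm_div, norm_pow, Real.norm_eq_abs, abs_neg, Nat.abs_cast]
      using Real.summable_pow_div_factorial |x|
  rw [kummer, kummer, hexp,
    tsum_mul_tsum_eq_tsum_sum_antidiagonal_of_summable_norm hf (summable_norm_kummer a x)]
  refine tsum_congr fun k => ?_
  rw [Finset.Nat.sum_antidiagonal_eq_sum_range_succ
    (fun m j => ((-x)^m / (m.factorial : ℝ)) *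
      ((ascPochhammer ℝ j).eval a * x ^ j / ((ascPochhammer ℝ j).eval (3/2:ℝ) * (j.factorial : ℝ)))) k]
  rw [← Finset.sum_range_reflect]
  have hst : ∀ j ∈ Finset.range (k+1),
      (fun i => ((-x)^i / (i.factorial : ℝ)) *
        ((ascPochhammer ℝ (k-i)).eval a * x ^ (k-i) /
          ((ascPochhammer ℝ (k-i)).eval (3/2:ℝ) * ((k-i).factorial : ℝ)))) (k + 1 - 1 - j)
      = ((-1:ℝ)^k * x^k / (k.factorial : ℝ)) *
        ((-1:ℝ)^j * (k.choose j) * (ascPochhammer ℝ j).eval a / (ascPochhammer ℝ j).eval (3/2:ℝ)) := by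
    intro j hj
    have hjk : j ≤ k := Nat.lt_succ_iff.mp (Finset.mem_range.mp hj)
    have e1 : k + 1 - 1 - j = k - j := by omega
    have e2 : k - (k - j) = j := by omega
    rw [e1]
    simp only [e2]
    have hpow : ((-x):ℝ)^(k-j) = (-1:ℝ)^k * (-1:ℝ)^j * x^(k-j) := by
      rw [neg_pow]
      congr 1
      rw [pow_sub₀ (-1:ℝ) (by norm_num) hjk]
      simp [div_eq_mul_inv]
      rw [← inv_pow]
      norm_num
    have hxk : x^(k-j) * x^j = x^k := by rw [← pow_add, Nat.sub_add_cancel hjk]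
    have hfact : ((k-j).factorial : ℝ) * (j.factorial : ℝ) * (k.choose j) = (k.factorial : ℝ) := by
      push_cast [← Nat.choose_mul_factorial_mul_factorial hjk]
      ring
    have h2 := ascPochhammer_pos j (3/2 : ℝ) (by norm_num)
    have h3 := Nat.cast_pos (α := ℝ) |>.mpr (k-j).factorial_pos
    have h4 := Nat.cast_pos (α := ℝ) |>.mpr j.factorial_pos
    have h5 := Nat.cast_pos (α := ℝ) |>.mpr k.factorial_pos
    field_simp [hpow]
    rw [hpow]
    rw [← hfact]
    ring_nf
    rw [← hxk]
    ring
  rw [Finset.sum_congr rfl hst, ← Finset.mul_sum,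
    vandermonde_poch k a (3/2 : ℝ) (by norm_num)]
  rw [neg_pow]
  have h2 := ascPochhammer_pos k (3/2 : ℝ) (by norm_num)
  have h5 := Nat.cast_pos (α := ℝ) |>.mpr k.factorial_pos
  field_simp
  ring

/-- `∫₀^∞ t^ν sin(tz) e^{−γt²} dt
      = (z/(2γ^{1+ν/2})) Γ(1+ν/2) e^{−z²/(4γ)} ₁F₁((1−ν)/2; 3/2; z²/(4γ))`. -/
theorem integral_rpow_sin_exp_neg_sq (γ ν z : ℝ) (hγ : 0 < γ) (hν : -1 < ν) :
    (∫ t in Ioi (0 : ℝ), t ^ ν * Real.sin (t * z) * Real.exp (-γ * t ^ 2))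
      = z / (2 * γ ^ (1 + ν / 2)) * Real.Gamma (1 + ν / 2)
        * Real.exp (-z ^ 2 / (4 * γ)) * kummer ((1 - ν) / 2) (3 / 2) (z ^ 2 / (4 * γ)) := by
  set x : ℝ := z ^ 2 / (4 * γ) with hxdef
  set s : ℕ → ℝ := fun k => ν + (2 * k + 1) with hsdef
  have hs : ∀ k : ℕ, -1 < s k := by
    intro k
    have : (0:ℝ) ≤ 2 * k := by positivity
    simp only [hsdef]; linarith
  set C : ℕ → ℝ := fun k => (-1) ^ k * z ^ (2 * k + 1) / ((2 * k + 1).factorial : ℝ) with hCdef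
  set F : ℕ → ℝ → ℝ := fun k t => C k * (t ^ (s k) * Real.exp (-γ * t ^ 2)) with hFdef
  have hν2 : (0:ℝ) < 1 + ν / 2 := by linarith
  have hγν : (0:ℝ) < γ ^ (1 + ν / 2) := rpow_pos_of_pos hγ _
  -- value of the k-th moment
  have hJ : ∀ k : ℕ, (∫ t in Ioi (0:ℝ), t ^ (s k) * Real.exp (-γ * t ^ 2))
      = Real.Gamma (1 + ν / 2) * (ascPochhammer ℝ k).eval (1 + ν / 2)
        / (2 * γ ^ (1 + ν / 2) * γ ^ k) := by
    intro k
    have h1 : (∫ t in Ioi (0:ℝ), t ^ (s k) * Real.exp (-γ * t ^ 2))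
        = ∫ t in Ioi (0:ℝ), t ^ (s k) * Real.exp (-γ * t ^ (2:ℝ)) := by
      refine setIntegral_congr_fun measurableSet_Ioi (fun t ht => ?_)
      rw [show ((2:ℝ)) = ((2:ℕ):ℝ) by norm_num, Real.rpow_natCast]
    rw [h1, integral_rpow_mul_exp_neg_mul_rpow two_pos (hs k) hγ]
    have h2 : (s k + 1) / 2 = (1 + ν / 2) + k := by simp only [hsdef]; ring
    have h3 : -(s k + 1) / 2 = -((1 + ν / 2) + k) := by simp only [hsdef]; ring
    rw [h3, Real.rpow_neg hγ.le, Real.rpow_add hγ, Real.rpow_natCast, h2,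
      gamma_add_nat _ hν2 k]
    have h4 : (0:ℝ) < γ ^ k := by positivity
    rw [eq_div_iff (by positivity : (2 * γ ^ (1 + ν / 2) * γ ^ k : ℝ) ≠ 0), mul_assoc, mul_comm,
      inv_mul_eq_div, div_div, mul_one_div, mul_comm (2:ℝ) (γ ^ (1 + ν / 2) * γ ^ k), ← mul_assoc,
      mul_assoc (Real.Gamma (1 + ν / 2) * (ascPochhammer ℝ k).eval (1 + ν / 2)), mul_div_assoc,
      show γ ^ (1 + ν / 2) * γ ^ k * 2 = 2 * γ ^ (1 + ν / 2) * γ ^ k by ring,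
      div_self (by positivity), mul_one]
  -- integrability of each term
  have hInt : ∀ k : ℕ, IntegrableOn (F k) (Ioi (0:ℝ)) := by
    intro k
    exact (integrableOn_rpow_mul_exp_neg_mul_sq hγ (hs k)).const_mul (C k)
  -- norms of integrals
  have hnorm : ∀ k : ℕ, (∫ t in Ioi (0:ℝ), ‖F k t‖)
      = |C k| * (∫ t in Ioi (0:ℝ), t ^ (s k) * Real.exp (-γ * t ^ 2)) := by
    intro k
    rw [← integral_const_mul]
    refine setIntegral_congr_fun measurableSet_Ioi (fun t ht => ?_)
    have ht0 : (0:ℝ) < t := ht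
    rw [hFdef]
    simp only [Real.norm_eq_abs, abs_mul]
    rw [abs_of_nonneg (Real.rpow_nonneg ht0.le _), abs_of_nonneg (Real.exp_nonneg _)]
  -- the summability bound
  have habs : ∀ k : ℕ, |C k| = |z| * (z^2)^k / ((2 * k + 1).factorial : ℝ) := by
    intro k
    rw [hCdef]
    have : z ^ (2 * k + 1) = (z^2)^k * z := by rw [pow_succ, pow_mul]
    rw [abs_div, abs_mul, abs_pow, abs_neg, abs_one, one_pow, one_mul, this, abs_mul, abs_pow,
      abs_of_nonneg (sq_nonneg z), Nat.abs_cast]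
    ring
  have hCJ : ∀ k : ℕ, |C k| * (Real.Gamma (1 + ν / 2) * (ascPochhammer ℝ k).eval (1 + ν / 2)
        / (2 * γ ^ (1 + ν / 2) * γ ^ k))
      = (Real.Gamma (1 + ν / 2) * |z| / (2 * γ ^ (1 + ν / 2)))
        * ((ascPochhammer ℝ k).eval (1 + ν / 2) * x ^ k
            / ((ascPochhammer ℝ k).eval (3/2 : ℝ) * (k.factorial : ℝ))) := by
    intro k
    rw [habs k, hxdef, div_pow, mul_pow]
    have h34 := poch_three_half k
    have h2 := ascPochhammer_pos k (3/2 : ℝ) (by norm_num)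
    have h5 := Nat.cast_pos (α := ℝ) |>.mpr k.factorial_pos
    have h6 := Nat.cast_pos (α := ℝ) |>.mpr (2*k+1).factorial_pos
    have h4 : (0:ℝ) < γ ^ k := by positivity
    rw [← h34]
    field_simp
  have hSum : Summable (fun k : ℕ => ∫ t in Ioi (0:ℝ), ‖F k t‖) := by
    have := (summable_kummer (1 + ν / 2) x).mul_left
      (Real.Gamma (1 + ν / 2) * |z| / (2 * γ ^ (1 + ν / 2)))
    refine this.congr fun k => ?_
    rw [hnorm k, hJ k, hCJ k]
  -- pointwise expansion of the integrand
  have hpt : ∀ t ∈ Ioi (0:ℝ), (∑' k : ℕ, F k t)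
      = t ^ ν * Real.sin (t * z) * Real.exp (-γ * t ^ 2) := by
    intro t ht
    have ht0 : (0:ℝ) < t := ht
    have h := (Real.hasSum_sin (t * z)).mul_left (t ^ ν * Real.exp (-γ * t ^ 2))
    have heq : ∀ k : ℕ, (t ^ ν * Real.exp (-γ * t ^ 2)) *
        ((-1) ^ k * (t * z) ^ (2 * k + 1) / ((2 * k + 1).factorial : ℝ)) = F k t := by
      intro k
      simp only [hFdef, hCdef]
      have h1 : (t * z) ^ (2 * k + 1) = t ^ (2 * k + 1) * z ^ (2 * k + 1) := mul_pow t z _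
      have h2 : t ^ (s k) = t ^ ν * t ^ (2 * k + 1 : ℕ) := by
        rw [← Real.rpow_natCast t (2 * k + 1), ← Real.rpow_add ht0]
        simp only [hsdef]
        norm_num
      rw [h1, h2]
      field_simp
    rw [tsum_congr fun k => (heq k).symm, h.tsum_eq]
    ring
  -- put it together
  have hmain : (∫ t in Ioi (0 : ℝ), t ^ ν * Real.sin (t * z) * Real.exp (-γ * t ^ 2))
      = ∑' k : ℕ, ∫ t in Ioi (0:ℝ), F k t := by
    rw [← setIntegral_congr_fun measurableSet_Ioi hpt]
    exact (integral_tsum_of_summable_integral_norm (fun k => hInt k) hSum).symm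
  rw [hmain]
  -- compute each integral
  have hI : ∀ k : ℕ, (∫ t in Ioi (0:ℝ), F k t)
      = C k * (Real.Gamma (1 + ν / 2) * (ascPochhammer ℝ k).eval (1 + ν / 2)
        / (2 * γ ^ (1 + ν / 2) * γ ^ k)) := by
    intro k
    rw [hFdef]
    simp only
    rw [integral_const_mul, hJ k]
  -- rewrite the RHS via the Kummer transformation
  have hx2 : -z ^ 2 / (4 * γ) = -x := by rw [hxdef]; ring
  have htr : Real.exp (-z ^ 2 / (4 * γ)) * kummer ((1 - ν) / 2) (3 / 2) x
      = kummer (1 + ν / 2) (3 / 2) (-x) := by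
    rw [hx2, kummer_transform ((1 - ν) / 2) x]
    norm_num
    ring_nf
  calc ∑' k : ℕ, ∫ t in Ioi (0:ℝ), F k t
      = ∑' k : ℕ, (z / (2 * γ ^ (1 + ν / 2)) * Real.Gamma (1 + ν / 2))
          * ((ascPochhammer ℝ k).eval (1 + ν / 2) * (-x) ^ k
            / ((ascPochhammer ℝ k).eval (3/2 : ℝ) * (k.factorial : ℝ))) := by
        refine tsum_congr fun k => ?_
        rw [hI k]
        simp only [hCdef]
        have h34 := poch_three_half k
        have h2 := ascPochhammer_pos k (3/2 : ℝ) (by norm_num)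
        have h5 := Nat.cast_pos (α := ℝ) |>.mpr k.factorial_pos
        have h6 := Nat.cast_pos (α := ℝ) |>.mpr (2*k+1).factorial_pos
        have h4 : (0:ℝ) < γ ^ k := by positivity
        have hz : z ^ (2 * k + 1) = (z^2)^k * z := by rw [pow_succ, pow_mul]
        have hxk : (-x) ^ k = (-1)^k * (z^2)^k / (4^k * γ^k) := by
          rw [neg_pow, hxdef, div_pow, mul_pow]
          ring
        rw [hz, hxk, ← h34]
        field_simp
    _ = (z / (2 * γ ^ (1 + ν / 2)) * Real.Gamma (1 + ν / 2)) * kummer (1 + ν / 2) (3/2) (-x) := by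
        rw [tsum_mul_left]; rfl
    _ = z / (2 * γ ^ (1 + ν / 2)) * Real.Gamma (1 + ν / 2)
        * Real.exp (-z ^ 2 / (4 * γ)) * kummer ((1 - ν) / 2) (3 / 2) x := by
        rw [← htr]; ring
end
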